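/- Every pro-Noetherian adic ring is Noetherian. Moreover, for every ideal of definition $I$ in such a ring $A$, the topology on $A$ coincides with the $I$-adic topology. -/

import Mathlib

open Filter Topology

/-- The descending chain `I` of ideals is a basis of neighborhoods of `0`
(this is the `{Iᵢ}`-topology). -/
def IsChainBasis (A : Type*) [CommRing A] [TopologicalSpace A] (I : ℕ → Ideal A) : Prop :=
  Antitone I ∧ ∀ s : Set A, s ∈ nhds (0 : A) ↔ ∃ i, (I i : Set A) ⊆ s

/-- An ideal of definition: an open ideal all of whose elements are topologically nilpotent. -/
def IsIdealOfDefinition (A : Type*) [CommRing A] [TopologicalSpace A] (J : Ideal A) : Prop :=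
  IsOpen (J : Set A) ∧ ∀ x ∈ J, Filter.Tendsto (fun n => x ^ n) Filter.atTop (nhds (0 : A))

/-- An admissible ring: a topological ring, linearly topologized with a countable chain of
ideals as a basis of neighborhoods of `0`, separated, complete, admitting an ideal of
definition. -/
structure IsAdmissible (A : Type*) [CommRing A] [TopologicalSpace A] : Prop where
  topRing : IsTopologicalRing A
  exists_chain : ∃ I : ℕ → Ideal A, IsChainBasis A I
  separated : ∀ x : A, (∀ U ∈ nhds (0 : A), x ∈ U) → x = 0
  complete : ∀ f : ℕ → A,
    (∀ U ∈ nhds (0 : A), ∃ N, ∀ m ≥ N, ∀ n ≥ N, f m - f n ∈ U) →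
    ∃ a : A, ∀ U ∈ nhds (0 : A), ∃ N, ∀ n ≥ N, a - f n ∈ U
  exists_idealOfDef : ∃ J : Ideal A, IsIdealOfDefinition A J

/-- The topology of `A` is the `J`-adic topology: the powers `J ^ n` form a basis of
neighborhoods of `0`. -/
def IsAdicTopology (A : Type*) [CommRing A] [TopologicalSpace A] (J : Ideal A) : Prop :=
  ∀ s : Set A, s ∈ nhds (0 : A) ↔ ∃ n : ℕ, ((J ^ n : Ideal A) : Set A) ⊆ s

/-!
Let the powers of `J` form a basis of neighbourhoods of `0`. Then `A` is `J`-adically separated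
and complete and every `A ⧸ J ^ n` is Noetherian. Lifting generators of `J / J ^ 2` and correcting
by successive approximation shows that `J` is finitely generated, say by `x₁, …, xᵣ`. The graded
ring `⨁ Jⁿ / Jⁿ⁺¹` is then a quotient of the Noetherian ring `(A ⧸ J)[X₁, …, Xᵣ]`, so the initial
forms of an ideal `K` are generated by those of finitely many elements of `K`, and successive
approximation once more shows that these elements generate `K`. For an ideal of definition `I`,
finite generation and topological nilpotence give `I ^ n ⊆ J ^ k`, and openness gives `J ^ m ⊆ I`.
-/

open MvPolynomial

section Homogeneous

variable {R ι : Type*} [CommRing R]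

attribute [local instance] MvPolynomial.gradedAlgebra in
theorem MvPolynomial.homogeneousComponent_mul_of_isHomogeneous {p q : MvPolynomial ι R} {d : ℕ}
    (hq : q.IsHomogeneous d) (n : ℕ) :
    homogeneousComponent n (p * q) = if d ≤ n then homogeneousComponent (n - d) p * q else 0 := by
  rw [← decomposition.decompose'_apply, ← decomposition.decompose'_apply]
  exact DirectSum.coe_decompose_mul_of_right_mem _ n ((mem_homogeneousSubmodule d q).mpr hq)

theorem MvPolynomial.IsHomogeneous.eval_mem_mul_pow (x : ι → R) {I : Ideal R}
    {p : MvPolynomial ι R} {n : ℕ} (hp : p.IsHomogeneous n) (hI : ∀ m, coeff m p ∈ I) :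
    eval x p ∈ I * Ideal.span (Set.range x) ^ n := by
  rw [p.as_sum, map_sum]
  refine Ideal.sum_mem _ fun m hm => ?_
  rw [← mul_one (coeff m p), ← C_mul_monomial, map_mul, eval_C]
  refine Ideal.mul_mem_mul (hI m) ((Ideal.mem_span_pow_iff_exists_isHomogeneous x _).mpr
    ⟨_, isHomogeneous_monomial _ ?_, rfl⟩)
  rw [Finsupp.degree_eq_weight_one]
  exact hp (mem_support_iff.mp hm)

theorem MvPolynomial.exists_eval_sub_sum_mem_pow_succ (x : ι → R) {T : Type*} [Fintype T]
    {q : T → MvPolynomial ι R} {d : T → ℕ} (hq : ∀ t, (q t).IsHomogeneous (d t))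
    {p : MvPolynomial ι R} {n : ℕ} (hp : p.IsHomogeneous n)
    (hpq : map (Ideal.Quotient.mk (Ideal.span (Set.range x))) p ∈
      Ideal.span (Set.range fun t => map (Ideal.Quotient.mk (Ideal.span (Set.range x))) (q t))) :
    ∃ g : T → R, (∀ t, g t ∈ Ideal.span (Set.range x) ^ (n - d t)) ∧
      eval x p - ∑ t, g t * eval x (q t) ∈ Ideal.span (Set.range x) ^ (n + 1) := by
  set J := Ideal.span (Set.range x)
  obtain ⟨c, hc⟩ := (Submodule.mem_span_range_iff_exists_fun _).mp hpq
  choose c' hc' using fun t => map_surjective _ Ideal.Quotient.mk_surjective (c t)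
  set D := p - ∑ t, c' t * q t
  have hD : ∀ m, coeff m D ∈ J := fun m => by
    rw [← Ideal.Quotient.eq_zero_iff_mem, ← coeff_map]
    simp [D, ← hc, hc']
  let g : T → R := fun t => if d t ≤ n then eval x (homogeneousComponent (n - d t) (c' t)) else 0
  have hg : ∀ t, g t ∈ J ^ (n - d t) := fun t => by
    by_cases ht : d t ≤ n
    · simpa [g, ht] using (Ideal.mem_span_pow_iff_exists_isHomogeneous x _).mpr
        ⟨_, homogeneousComponent_isHomogeneous (n - d t) (c' t), rfl⟩
    · simp [g, ht]
  have hDn : eval x (homogeneousComponent n D) = eval x p - ∑ t, g t * eval x (q t) := by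
    simp only [D, map_sub, map_sum, homogeneousComponent_mul_of_isHomogeneous (hq _),
      homogeneousComponent_of_mem ((mem_homogeneousSubmodule n p).mpr hp), if_pos]
    congr 1
    refine Finset.sum_congr rfl fun t _ => ?_
    split_ifs <;> simp [g, *]
  refine ⟨g, hg, ?_⟩
  rw [← hDn, pow_succ']
  refine (homogeneousComponent_isHomogeneous n D).eval_mem_mul_pow x fun m => ?_
  rw [coeff_homogeneousComponent]
  split_ifs
  · exact hD m
  · exact zero_mem _

theorem MvPolynomial.eval_mem_pow_mul_span_sup_pow_succ (x : ι → R) {T : Type*} [Fintype T]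
    {q : T → MvPolynomial ι R} {d : T → ℕ} (hq : ∀ t, (q t).IsHomogeneous (d t)) {b : T → R}
    (hb : ∀ t, eval x (q t) - b t ∈ Ideal.span (Set.range x) ^ (d t + 1)) {e : ℕ}
    (he : ∀ t, d t ≤ e) {p : MvPolynomial ι R} {n : ℕ} (hp : p.IsHomogeneous n)
    (hpq : map (Ideal.Quotient.mk (Ideal.span (Set.range x))) p ∈
      Ideal.span (Set.range fun t => map (Ideal.Quotient.mk (Ideal.span (Set.range x))) (q t))) :
    eval x p ∈ Ideal.span (Set.range x) ^ (n - e) * Ideal.span (Set.range b) ⊔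
      Ideal.span (Set.range x) ^ (n + 1) := by
  obtain ⟨g, hg, hgp⟩ := exists_eval_sub_sum_mem_pow_succ x hq hp hpq
  have hsplit : eval x p = ∑ t, g t * b t +
      ((eval x p - ∑ t, g t * eval x (q t)) + ∑ t, g t * (eval x (q t) - b t)) := by
    simp only [mul_sub, Finset.sum_sub_distrib]
    ring
  rw [hsplit]
  refine Submodule.add_mem_sup
    (sum_mem fun t _ => Ideal.mul_mem_mul ?_ (Ideal.subset_span ⟨t, rfl⟩))
    (add_mem hgp (sum_mem fun t _ => ?_))
  · exact Ideal.pow_le_pow_right (Nat.sub_le_sub_left (he t) n) (hg t)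
  · have hgt := Ideal.mul_mem_mul (hg t) (hb t)
    rw [← pow_add] at hgt
    exact Ideal.pow_le_pow_right (by omega) hgt

end Homogeneous

section AdicComplete

variable {A : Type*} [CommRing A]

theorem Ideal.smodEq_pow_smul_top_iff (J : Ideal A) {a b : A} {n : ℕ} :
    a ≡ b [SMOD (J ^ n • ⊤ : Submodule A A)] ↔ a - b ∈ J ^ n := by
  rw [SModEq.sub_mem, smul_eq_mul, Ideal.mul_top]

theorem Ideal.exists_sum_mul_eq_of_mem_mul_span {ι : Type*} [Fintype ι] {N : Ideal A}
    {f : ι → A} {y : A} (hy : y ∈ N * Ideal.span (Set.range f)) :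
    ∃ g : ι → A, (∀ i, g i ∈ N) ∧ ∑ i, g i * f i = y := by
  rw [← smul_eq_mul, Ideal.span, Submodule.mem_ideal_smul_span_iff_exists_sum] at hy
  obtain ⟨g, hg, rfl⟩ := hy
  exact ⟨g, hg, by simp [Finsupp.sum_fintype]⟩

variable (J : Ideal A)

theorem IsHausdorff.eq_zero_of_forall_mem_pow [IsHausdorff J A] {a : A} (h : ∀ n, a ∈ J ^ n) :
    a = 0 :=
  IsHausdorff.haus ‹_› a fun n => (J.smodEq_pow_smul_top_iff).mpr (by simpa using h n)

theorem IsPrecomplete.exists_sub_sum_range_mem_pow [IsPrecomplete J A] {u : ℕ → A} {d : ℕ}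
    (hu : ∀ n, u n ∈ J ^ (n - d)) :
    ∃ L, ∀ n, L - ∑ k ∈ Finset.range (n + d), u k ∈ J ^ n := by
  have tail : ∀ {m n}, m ≤ n →
      ∑ k ∈ Finset.range (m + d), u k - ∑ k ∈ Finset.range (n + d), u k ∈ J ^ m := by
    intro m n hmn
    rw [← neg_mem_iff, neg_sub, ← Finset.sum_Ico_eq_sub _ (by omega)]
    exact sum_mem fun k hk => Ideal.pow_le_pow_right (by rw [Finset.mem_Ico] at hk; omega) (hu k)
  obtain ⟨L, hL⟩ := IsPrecomplete.prec ‹_› (f := fun n => ∑ k ∈ Finset.range (n + d), u k)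
    fun hmn => (J.smodEq_pow_smul_top_iff).mpr (tail hmn)
  refine ⟨L, fun n => ?_⟩
  rw [← neg_mem_iff, neg_sub]
  exact (J.smodEq_pow_smul_top_iff).mp (hL n)

theorem IsAdicComplete.eq_span_of_inf_pow_le [IsAdicComplete J A] {ι : Type*} [Fintype ι]
    {K : Ideal A} {f : ι → A} (hfK : ∀ i, f i ∈ K) (d : ℕ)
    (h : ∀ n, K ⊓ J ^ n ≤ J ^ (n - d) * Ideal.span (Set.range f) ⊔ J ^ (n + 1)) :
    K = Ideal.span (Set.range f) := by
  refine le_antisymm (fun a ha => ?_) (Ideal.span_le.mpr (Set.range_subset_iff.mpr hfK))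
  have step : ∀ n, ∀ r ∈ K ⊓ J ^ n, ∃ g : ι → A,
      (∀ i, g i ∈ J ^ (n - d)) ∧ r - ∑ i, g i * f i ∈ K ⊓ J ^ (n + 1) := by
    intro n r hr
    obtain ⟨y, hy, e, he, rfl⟩ := Submodule.mem_sup.mp (h n hr)
    obtain ⟨g, hg, rfl⟩ := Ideal.exists_sum_mul_eq_of_mem_mul_span hy
    refine ⟨g, hg, ?_, by simpa using he⟩
    simpa using sub_mem hr.1 (sum_mem (t := Finset.univ) fun i _ => K.mul_mem_left (g i) (hfK i))
  choose g hg hrest using step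
  let r : (n : ℕ) → ↥(K ⊓ J ^ n) := fun n =>
    Nat.rec ⟨a, ha, by simp⟩ (fun n r => ⟨r.1 - ∑ i, g n r.1 r.2 i * f i, hrest n r.1 r.2⟩) n
  let u : ℕ → ι → A := fun n => g n (r n).1 (r n).2
  have hr : ∀ N, a = ∑ i, (∑ k ∈ Finset.range N, u k i) * f i + (r N).1 := by
    intro N
    induction N with
    | zero => simp [r]
    | succ N ih =>
      simp only [Finset.sum_range_succ, add_mul, Finset.sum_add_distrib]
      rw [ih]
      show _ = _ + ((r N).1 - ∑ i, u N i * f i)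
      ring
  choose L hL using fun i => IsPrecomplete.exists_sub_sum_range_mem_pow J (u := fun k => u k i)
    (d := d) fun k => hg _ _ _ i
  have hLa : a - ∑ i, L i * f i = 0 := by
    refine IsHausdorff.eq_zero_of_forall_mem_pow J fun n => ?_
    have hdiff : a - ∑ i, L i * f i =
        (r (n + d)).1 - ∑ i, (L i - ∑ k ∈ Finset.range (n + d), u k i) * f i := by
      conv_lhs => rw [hr (n + d)]
      simp only [sub_mul, Finset.sum_sub_distrib]
      ring
    rw [hdiff]
    exact sub_mem (Ideal.pow_le_pow_right (by omega) (r (n + d)).2.2)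
      (sum_mem fun i _ => Ideal.mul_mem_right _ _ (hL i n))
  rw [sub_eq_zero.mp hLa]
  exact sum_mem fun i _ => Ideal.mul_mem_left _ _ (Ideal.subset_span ⟨i, rfl⟩)

theorem IsAdicComplete.fg_of_fg_map_pow_two [IsAdicComplete J A]
    (h : (J.map (Ideal.Quotient.mk (J ^ 2))).FG) : J.FG := by
  classical
  obtain ⟨T, hTJ, hT⟩ := (Submodule.fg_span_iff_fg_span_finset_subset _).mp h
  obtain ⟨s, hsJ, rfl⟩ := Finset.subset_set_image_iff.mp hTJ
  have hJs : J ≤ Ideal.span s ⊔ J ^ 2 := fun a ha => by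
    have : Ideal.Quotient.mk (J ^ 2) a ∈ (Ideal.span (s : Set A)).map (Ideal.Quotient.mk _) := by
      rw [Ideal.map_span, ← Finset.coe_image, Ideal.span, ← hT]
      exact Ideal.mem_map_of_mem _ ha
    rwa [← Ideal.mem_comap, Ideal.comap_map_of_surjective' _ Ideal.Quotient.mk_surjective,
      Ideal.mk_ker] at this
  have hspan := IsAdicComplete.eq_span_of_inf_pow_le J (f := ((↑) : s → A)) (K := J)
    (fun i => hsJ i.2) 1 fun n => by
      rcases n with _ | m
      · exact inf_le_left.trans (le_sup_of_le_right (pow_one J).ge)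
      have hle : J ⊓ J ^ (m + 1) ≤ J ^ m * (Ideal.span s ⊔ J ^ 2) :=
        inf_le_right.trans ((pow_succ J m).le.trans (Ideal.mul_mono_right hJs))
      have heq : J ^ m * (Ideal.span s ⊔ J ^ 2) =
          J ^ (m + 1 - 1) * Ideal.span (Set.range ((↑) : s → A)) ⊔ J ^ (m + 1 + 1) := by
        rw [Nat.add_sub_cancel, Ideal.mul_sup, ← pow_add, Subtype.range_coe]
      exact hle.trans heq.le
  rw [hspan, Subtype.range_coe]
  exact ⟨s, rfl⟩

theorem IsAdicComplete.fg_of_span_range_eq [IsAdicComplete J A] {ι : Type*} [Finite ι]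
    {x : ι → A} (hx : Ideal.span (Set.range x) = J) [IsNoetherianRing (A ⧸ J)] (K : Ideal A) :
    K.FG := by
  classical
  subst hx
  set J := Ideal.span (Set.range x)
  -- the reductions `red w` of the triples `w = (n, q, b) ∈ S` span the ideal of initial forms of
  -- `K` in `(A ⧸ J)[X]`, which is finitely generated
  let S : Set (ℕ × MvPolynomial ι A × A) :=
    {w | w.2.1.IsHomogeneous w.1 ∧ w.2.2 ∈ K ∧ eval x w.2.1 - w.2.2 ∈ J ^ (w.1 + 1)}
  let red : ℕ × MvPolynomial ι A × A → MvPolynomial ι (A ⧸ J) :=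
    fun w => map (Ideal.Quotient.mk J) w.2.1
  obtain ⟨T, hTS, hT⟩ := (Submodule.fg_span_iff_fg_span_finset_subset (red '' S)).mp
    (IsNoetherian.noetherian (Ideal.span (red '' S)))
  obtain ⟨s, hsS, rfl⟩ := Finset.subset_set_image_iff.mp hTS
  have hS : ∀ w : s, w.1 ∈ S := fun w => hsS w.2
  have hspan : Ideal.span (red '' S) = Ideal.span (Set.range fun w : s => red w) := by
    rw [Ideal.span, hT, Finset.coe_image]
    congr 1
    ext
    simp
  let b : s → A := fun w => w.1.2.2
  refine ⟨Finset.univ.image b, ?_⟩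
  rw [Finset.coe_image, Finset.coe_univ, Set.image_univ]
  refine (IsAdicComplete.eq_span_of_inf_pow_le J (fun w => (hS w).2.1) (s.sup Prod.fst)
    fun n a ha => ?_).symm
  obtain ⟨p, hp, rfl⟩ := (Ideal.mem_span_pow_iff_exists_isHomogeneous x a).mp ha.2
  refine eval_mem_pow_mul_span_sup_pow_succ x (fun w => (hS w).1) (fun w => (hS w).2.2)
    (fun w => Finset.le_sup (f := Prod.fst) w.2) hp ?_
  change red (n, p, eval x p) ∈ _
  rw [← hspan]
  exact Ideal.subset_span ⟨_, ⟨hp, ha.1, by simp⟩, rfl⟩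

theorem IsAdicComplete.isNoetherianRing [IsAdicComplete J A] (hJ : J.FG)
    [IsNoetherianRing (A ⧸ J)] : IsNoetherianRing A := by
  obtain ⟨s, rfl⟩ := hJ
  exact (isNoetherianRing_iff_ideal_fg A).mpr
    (IsAdicComplete.fg_of_span_range_eq _ (x := ((↑) : s → A)) (by rw [Subtype.range_coe]))

end AdicComplete

section Topology

variable {A : Type*} [CommRing A] [TopologicalSpace A]

theorem IsAdmissible.isAdicComplete (hA : IsAdmissible A) {J : Ideal A}
    (hJ : IsAdicTopology A J) : IsAdicComplete J A where
  haus' a ha := hA.separated a fun U hU => by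
    obtain ⟨n, hn⟩ := (hJ U).mp hU
    simpa using hn ((J.smodEq_pow_smul_top_iff).mp (ha n))
  prec' f hf := by
    have hf' : ∀ {m n}, m ≤ n → f m - f n ∈ J ^ m := fun h => (J.smodEq_pow_smul_top_iff).mp (hf h)
    obtain ⟨L, hL⟩ := hA.complete f fun U hU => by
      obtain ⟨k, hk⟩ := (hJ U).mp hU
      refine ⟨k, fun m hm n hn => hk ?_⟩
      simpa using sub_mem (hf' hn.le) (hf' hm.le)
    refine ⟨L, fun n => (J.smodEq_pow_smul_top_iff).mpr ?_⟩
    obtain ⟨N, hN⟩ := hL _ ((hJ _).mpr ⟨n, subset_rfl⟩)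
    simpa using sub_mem (hf' (le_max_left n N)) (hN _ (le_max_right n N))

theorem IsAdicTopology.isOpen_pow [IsTopologicalRing A] {J : Ideal A} (hJ : IsAdicTopology A J)
    (n : ℕ) : IsOpen ((J ^ n : Ideal A) : Set A) :=
  (J ^ n).toAddSubgroup.isOpen_of_mem_nhds ((hJ _).mpr ⟨n, subset_rfl⟩)

theorem IsAdicTopology.of_isIdealOfDefinition {J I : Ideal A} (hJ : IsAdicTopology A J)
    (hI : IsIdealOfDefinition A I) (hIfg : I.FG) : IsAdicTopology A I := by
  intro s
  constructor
  · intro hs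
    obtain ⟨k, hk⟩ := (hJ s).mp hs
    have hrad : I ≤ (J ^ k).radical := fun y hy =>
      ((hI.2 y hy).eventually_mem ((hJ _).mpr ⟨k, subset_rfl⟩)).exists
    obtain ⟨n, hn⟩ := Ideal.exists_pow_le_of_le_radical_of_fg hrad hIfg
    exact ⟨n, Set.Subset.trans hn hk⟩
  · rintro ⟨n, hn⟩
    obtain ⟨m, hm⟩ := (hJ _).mp (hI.1.mem_nhds I.zero_mem)
    refine (hJ s).mpr ⟨m * n, Set.Subset.trans ?_ hn⟩
    rw [pow_mul]
    exact Ideal.pow_right_mono hm n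

end Topology

theorem stmt_4 (A : Type*) [CommRing A] [TopologicalSpace A] (hA : IsAdmissible A)
    (hpro : ∀ J : Ideal A, IsOpen (J : Set A) → IsNoetherianRing (A ⧸ J))
    (hadic : ∃ J : Ideal A, IsAdicTopology A J) :
    IsNoetherianRing A ∧
      ∀ I : Ideal A, IsIdealOfDefinition A I → IsAdicTopology A I := by
  have := hA.topRing
  obtain ⟨J, hJ⟩ := hadic
  have := hA.isAdicComplete hJ
  have hJfg : J.FG := IsAdicComplete.fg_of_fg_map_pow_two J
    ((isNoetherianRing_iff_ideal_fg _).mp (hpro _ (hJ.isOpen_pow 2)) _)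
  have : IsNoetherianRing (A ⧸ J) := hpro J (by simpa using hJ.isOpen_pow 1)
  have hnoeth : IsNoetherianRing A := IsAdicComplete.isNoetherianRing J hJfg
  exact ⟨hnoeth, fun I hI => hJ.of_isIdealOfDefinition hI (IsNoetherian.noetherian I)⟩
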